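/- Let H₁(r,θ) = μ r² cos(Nθ) − A e^{−m r²} + g(r), defined in polar coordinates on ℝ² \ {0}, where μ, A, m > 0, N is a positive integer, mA > μ, and g is smooth and constant near r_c := √((1/m)·ln(mA/μ)). Then every critical point of H₁ with r > 0 near r_c satisfies cos(Nθ) = −1 and r = r_c; in particular there are exactly N such critical points on the circle r = r_c. -/

import Mathlib

open Real Set

/-!
At a critical point `sin (Nθ) = 0`, so `cos (Nθ) = ±1`; the radial equation reads
`μ cos (Nθ) = -m A e^{-m r²} < 0`, which forces `cos (Nθ) = -1` and then `m A e^{-m r²} = μ`,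
i.e. `r = r_c`. On `[0, 2π)` the solutions of `cos (Nθ) = -1` are `(2k + 1) π / N`, `0 ≤ k < N`.
-/

theorem Real.sin_natCast_mul_eq_zero_of_mul_eq_zero {N : ℕ} {θ : ℝ}
    (h : (N : ℝ) * sin (N * θ) = 0) : sin (N * θ) = 0 := by
  rcases mul_eq_zero.mp h with hN | hs
  · simp [hN]
  · exact hs

theorem Real.cos_eq_neg_one_of_sin_eq_zero_of_cos_neg {x : ℝ} (hs : sin x = 0) (hc : cos x < 0) :
    cos x = -1 := by
  nlinarith [sin_sq_add_cos_sq x]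

theorem Real.eq_sqrt_log_of_mul_exp_neg_mul_sq_eq {μ A m r : ℝ} (hμ : μ ≠ 0) (hr : 0 ≤ r)
    (h : m * A * exp (-m * r ^ 2) = μ) : r = sqrt ((1 / m) * log (m * A / μ)) := by
  have hmA : m * A ≠ 0 := by rintro hmA; simp [hmA] at h; exact hμ h.symm
  have hm : m ≠ 0 := left_ne_zero_of_mul hmA
  have hexp : exp (-m * r ^ 2) = μ / (m * A) := by rw [eq_div_iff hmA, ← h, mul_comm]
  have hlog : -m * r ^ 2 = -log (m * A / μ) := by
    rw [← log_exp (-m * r ^ 2), hexp, ← log_inv, inv_div]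
  have hr2 : r ^ 2 = (1 / m) * log (m * A / μ) := by field_simp; linarith
  rw [← hr2, sqrt_sq hr]

section OddMultiples

variable {N : ℕ}

theorem Real.cos_natCast_mul_eq_neg_one_iff (hN : N ≠ 0) {θ : ℝ} :
    cos (N * θ) = -1 ↔ ∃ k : ℤ, (2 * k + 1) * π / N = θ := by
  rw [cos_eq_neg_one_iff]
  refine exists_congr fun k => ?_
  rw [div_eq_iff (by exact_mod_cast hN)]
  constructor <;> intro h <;> linarith

theorem odd_mul_pi_div_natCast_mem_Ico_iff (hN : N ≠ 0) (k : ℤ) :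
    (2 * k + 1) * π / N ∈ Ico 0 (2 * π) ↔ k ∈ Ico 0 (N : ℤ) := by
  have hNR : (0 : ℝ) < N := by positivity
  have h2πN : 2 * π * N = (2 * N) * π := by ring
  rw [mem_Ico, mem_Ico, le_div_iff₀ hNR, div_lt_iff₀ hNR, zero_mul, h2πN,
    mul_nonneg_iff_of_pos_right pi_pos, mul_lt_mul_iff_left₀ pi_pos]
  norm_cast
  omega

theorem odd_mul_pi_div_natCast_injective (hN : N ≠ 0) :
    Function.Injective fun k : ℤ => (2 * k + 1) * π / N := by
  intro a b hab
  have hNR : (N : ℝ) ≠ 0 := by exact_mod_cast hN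
  have : (a : ℝ) = b := by
    field_simp at hab
    linarith [pi_pos]
  exact_mod_cast this

theorem setOf_cos_natCast_mul_eq_neg_one_eq_image (hN : N ≠ 0) :
    {θ : ℝ | θ ∈ Ico 0 (2 * π) ∧ cos (N * θ) = -1} =
      (fun k : ℤ => (2 * k + 1) * π / N) '' Ico 0 (N : ℤ) := by
  ext θ
  simp only [mem_ofPred_eq, mem_image, cos_natCast_mul_eq_neg_one_iff hN]
  constructor
  · rintro ⟨hθ, k, rfl⟩
    exact ⟨k, (odd_mul_pi_div_natCast_mem_Ico_iff hN k).mp hθ, rfl⟩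
  · rintro ⟨k, hk, rfl⟩
    exact ⟨(odd_mul_pi_div_natCast_mem_Ico_iff hN k).mpr hk, k, rfl⟩

theorem ncard_setOf_cos_natCast_mul_eq_neg_one (N : ℕ) :
    {θ : ℝ | θ ∈ Ico 0 (2 * π) ∧ cos (N * θ) = -1}.ncard = N := by
  rcases eq_or_ne N 0 with rfl | hN
  · norm_num
  rw [setOf_cos_natCast_mul_eq_neg_one_eq_image hN,
    ncard_image_of_injective _ (odd_mul_pi_div_natCast_injective hN), ← Finset.coe_Ico,
    ncard_coe_finset, Int.card_Ico]
  simp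

end OddMultiples

theorem stmt_0_general (μ A m : ℝ) (N : ℕ) (hμ : 0 < μ) (hmA : μ < m * A)
    (rc : ℝ) (hrc : rc = Real.sqrt ((1 / m) * Real.log (m * A / μ))) :
    (∀ r θ : ℝ, 0 < r →
      2 * μ * r * Real.cos (N * θ) + 2 * m * r * A * Real.exp (-m * r ^ 2) = 0 →
      -(N : ℝ) * μ * r ^ 2 * Real.sin (N * θ) = 0 →
      Real.cos (N * θ) = -1 ∧ r = rc) ∧
    ({θ : ℝ | θ ∈ Set.Ico (0 : ℝ) (2 * π) ∧ Real.cos (N * θ) = -1}.ncard = N) := by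
  refine ⟨fun r θ hr hdr hdθ => ?_, ncard_setOf_cos_natCast_mul_eq_neg_one N⟩
  have hsin : sin (N * θ) = 0 := by
    have h : (N * sin (N * θ)) * (μ * r ^ 2) = 0 := by linear_combination -hdθ
    exact sin_natCast_mul_eq_zero_of_mul_eq_zero ((mul_eq_zero.mp h).resolve_right (by positivity))
  have hradial : μ * cos (N * θ) = -(m * A * exp (-m * r ^ 2)) :=
    mul_left_cancel₀ (mul_ne_zero two_ne_zero hr.ne') (by linear_combination hdr)
  have hcos_neg : cos (N * θ) < 0 := by
    refine neg_of_mul_neg_right ?_ hμ.le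
    rw [hradial, neg_neg_iff_pos]
    exact mul_pos (hμ.trans hmA) (exp_pos _)
  have hcos := cos_eq_neg_one_of_sin_eq_zero_of_cos_neg hsin hcos_neg
  refine ⟨hcos, hrc ▸ eq_sqrt_log_of_mul_exp_neg_mul_sq_eq hμ.ne' hr.le ?_⟩
  rw [hcos] at hradial
  linarith

/-- Critical points of `H₁(r,θ) = μ r² cos(Nθ) − A e^{−m r²} + g(r)` (with `g` constant
near `r_c`) away from the origin: they satisfy `cos(Nθ) = −1` and `r = r_c`, and there
are exactly `N` of them on the circle `r = r_c`. -/
theorem stmt_0 (μ A m : ℝ) (N : ℕ) (hμ : 0 < μ) (hA : 0 < A) (hm : 0 < m)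
    (hN : 0 < N) (hmA : μ < m * A)
    (rc : ℝ) (hrc : rc = Real.sqrt ((1 / m) * Real.log (m * A / μ))) :
    (∀ r θ : ℝ, 0 < r →
      2 * μ * r * Real.cos (N * θ) + 2 * m * r * A * Real.exp (-m * r ^ 2) = 0 →
      -(N : ℝ) * μ * r ^ 2 * Real.sin (N * θ) = 0 →
      Real.cos (N * θ) = -1 ∧ r = rc) ∧
    ({θ : ℝ | θ ∈ Set.Ico (0 : ℝ) (2 * π) ∧ Real.cos (N * θ) = -1}.ncard = N) :=
  stmt_0_general μ A m N hμ hmA rc hrc
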